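/- For each k ∈ F_p, the module L_k with basis z_0, …, z_r (where r ∈ {0,…,p−1} satisfies r ≡ −2k mod p) and action ζ·z_j = (k+j)z_j, v·z_j = (1/2)j(1−2k−j)z_{j−1}, y·z_j = z_{j+1} (with z_{r+1} = 0), x·z_j = u·z_j = 0, g·z_j = z_j, is a well-defined simple D(H)-module of dimension r+1. -/

import Mathlib

/-!
Since `u` and `x` act by `0` and `g` by `1`, the defining relations reduce to the brackets
`[ζ, y] = y`, `[v, ζ] = v`, `[v, y] = -ζ` and to `ζ ^ p = ζ`, `v ^ p = y ^ p = 0`. On `z_j` the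
bracket `[v, y] = -ζ` amounts to `c_{j+1} - c_j = -(k + j)` for the lowering coefficients
`c_j = j (1 - 2k - j) / 2`, and at the top of the string it needs `c_{r+1} = 0`, which is where
`r ≡ -2k` enters. The `p`-th power relations hold because `r < p` and the weights `k + j` lie
in `𝔽_p`.

As for simplicity, the weights `k + j` (`j ≤ r < p`) are pairwise distinct, so a nonzero invariant
subspace contains some `z_j`; the coefficients `c_1, …, c_r` do not vanish, so `v` lowers `z_j` to
`z_0`, and the powers of `y` then reach every `z_j`.
-/

namespace RestrictedJordanDouble

variable (K : Type*) [Field K]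

/-- Generators of `D(H)`: `u = ι 0`, `v = ι 1`, `ζ = ι 2`, `g = ι 3`, `x = ι 4`, `y = ι 5`. -/
noncomputable abbrev U : FreeAlgebra K (Fin 6) := FreeAlgebra.ι K 0
noncomputable abbrev V : FreeAlgebra K (Fin 6) := FreeAlgebra.ι K 1
noncomputable abbrev Z : FreeAlgebra K (Fin 6) := FreeAlgebra.ι K 2
noncomputable abbrev G : FreeAlgebra K (Fin 6) := FreeAlgebra.ι K 3
noncomputable abbrev X : FreeAlgebra K (Fin 6) := FreeAlgebra.ι K 4
noncomputable abbrev Y : FreeAlgebra K (Fin 6) := FreeAlgebra.ι K 5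

/-- The defining relations of the Drinfeld double `D(H)` of the bosonization of the
restricted Jordan plane (Proposition 1.6). -/
inductive DRel (p : ℕ) : FreeAlgebra K (Fin 6) → FreeAlgebra K (Fin 6) → Prop
  | gp : DRel p ((G K) ^ p) 1
  | gx : DRel p (G K * X K) (X K * G K)
  | gy : DRel p (G K * Y K) (Y K * G K + X K * G K)
  | xp : DRel p ((X K) ^ p) 0
  | yp : DRel p ((Y K) ^ p) 0
  | yx : DRel p (Y K * X K) (X K * Y K - (1/2 : K) • (X K) ^ 2)
  | zp : DRel p ((Z K) ^ p) (Z K)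
  | gz : DRel p (G K * Z K) (Z K * G K)
  | vp : DRel p ((V K) ^ p) 0
  | up : DRel p ((U K) ^ p) 0
  | vu : DRel p (V K * U K) (U K * V K - (1/2 : K) • (U K) ^ 2)
  | vz : DRel p (V K * Z K) (Z K * V K + V K)
  | uz : DRel p (U K * Z K) (Z K * U K + U K)
  | zy : DRel p (Z K * Y K) (Y K * Z K + Y K)
  | zx : DRel p (Z K * X K) (X K * Z K + X K)
  | vg : DRel p (V K * G K) (G K * V K + G K * U K)
  | ug : DRel p (U K * G K) (G K * U K)
  | vx : DRel p (V K * X K) (X K * V K + (1 - G K) + X K * U K)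
  | ux : DRel p (U K * X K) (X K * U K)
  | uy : DRel p (U K * Y K) (Y K * U K + (1 - G K))
  | vy : DRel p (V K * Y K) (Y K * V K - G K * Z K + Y K * U K)

/-- The Drinfeld double `D(H)`. -/
noncomputable abbrev DH (p : ℕ) := RingQuot (DRel K p)

/-- The images of the generators in `D(H)`. -/
noncomputable abbrev u (p : ℕ) : DH K p := RingQuot.mkAlgHom K (DRel K p) (U K)
noncomputable abbrev v (p : ℕ) : DH K p := RingQuot.mkAlgHom K (DRel K p) (V K)
noncomputable abbrev z (p : ℕ) : DH K p := RingQuot.mkAlgHom K (DRel K p) (Z K)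
noncomputable abbrev g (p : ℕ) : DH K p := RingQuot.mkAlgHom K (DRel K p) (G K)
noncomputable abbrev x (p : ℕ) : DH K p := RingQuot.mkAlgHom K (DRel K p) (X K)
noncomputable abbrev y (p : ℕ) : DH K p := RingQuot.mkAlgHom K (DRel K p) (Y K)

variable {K}

def lowerCoeff (k : K) (j : ℕ) : K := 1 / 2 * j * (1 - 2 * k - j)

lemma lowerCoeff_succ (h2 : (2 : K) ≠ 0) (k : K) (j : ℕ) :
    lowerCoeff k (j + 1) = lowerCoeff k j - (k + j) := by
  unfold lowerCoeff; push_cast; field_simp; ring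

lemma lowerCoeff_succ_eq_zero {k : K} {r : ℕ} (hr : (r : K) = -(2 * k)) :
    lowerCoeff k (r + 1) = 0 := by
  unfold lowerCoeff; push_cast; rw [hr]; ring

/-- `z_j` for `j < n`, and `0` beyond the top; this makes the action formulas below uniform
in `j`. -/
def weightVec (n j : ℕ) : Fin n → K := if h : j < n then Pi.single ⟨j, h⟩ 1 else 0

lemma weightVec_of_lt {n j : ℕ} (h : j < n) :
    weightVec n j = (Pi.single ⟨j, h⟩ 1 : Fin n → K) :=
  dif_pos h

lemma weightVec_of_le {n j : ℕ} (h : n ≤ j) : weightVec n j = (0 : Fin n → K) :=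
  dif_neg h.not_gt

lemma weightVec_val {n : ℕ} (i : Fin n) : weightVec n i = (Pi.single i 1 : Fin n → K) :=
  weightVec_of_lt i.isLt

lemma ext_weightVec {n : ℕ} {f g : Module.End K (Fin n → K)}
    (h : ∀ j < n, f (weightVec n j) = g (weightVec n j)) : f = g :=
  (Pi.basisFun K (Fin n)).ext fun i => by
    simpa only [Pi.basisFun_apply, weightVec_val] using h i i.isLt

def weightOp (k : K) (n : ℕ) : Module.End K (Fin n → K) :=
  LinearMap.mulLeft K fun i : Fin n => k + (i : ℕ)

noncomputable def raiseOp (n : ℕ) : Module.End K (Fin n → K) :=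
  (Pi.basisFun K (Fin n)).constr K fun i => weightVec n (i + 1)

/-- The truncated `i - 1` at `i = 0` is harmless: `lowerCoeff k 0 = 0`. -/
noncomputable def lowerOp (k : K) (n : ℕ) : Module.End K (Fin n → K) :=
  (Pi.basisFun K (Fin n)).constr K fun i => lowerCoeff k i • weightVec n (i - 1)

section Action

variable (k : K) {n : ℕ}

lemma weightOp_weightVec (j : ℕ) : weightOp k n (weightVec n j) = (k + j) • weightVec n j := by
  rcases lt_or_ge j n with h | h
  · ext i
    rw [weightVec_of_lt h, weightOp, LinearMap.mulLeft_apply]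
    by_cases hi : i = ⟨j, h⟩ <;> simp [hi]
  · simp [weightVec_of_le h]

lemma raiseOp_weightVec (j : ℕ) :
    raiseOp n (weightVec n j) = (weightVec n (j + 1) : Fin n → K) := by
  rcases lt_or_ge j n with h | h
  · rw [weightVec_of_lt h, ← Pi.basisFun_apply, raiseOp, Module.Basis.constr_basis]
  · rw [weightVec_of_le h, weightVec_of_le (by omega), map_zero]

lemma lowerOp_weightVec_zero : lowerOp k n (weightVec n 0) = 0 := by
  rcases Nat.eq_zero_or_pos n with rfl | h
  · exact Subsingleton.elim _ _
  · rw [weightVec_of_lt h, ← Pi.basisFun_apply, lowerOp, Module.Basis.constr_basis]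
    simp [lowerCoeff]

lemma lowerOp_weightVec_succ (hc : lowerCoeff k n = 0) (j : ℕ) :
    lowerOp k n (weightVec n (j + 1)) = lowerCoeff k (j + 1) • weightVec n j := by
  rcases lt_or_ge (j + 1) n with h | h
  · rw [weightVec_of_lt h, ← Pi.basisFun_apply, lowerOp, Module.Basis.constr_basis]
    rfl
  · obtain rfl | h' := h.eq_or_lt
    · rw [hc, zero_smul, weightVec_of_le le_rfl, map_zero]
    · rw [weightVec_of_le h, weightVec_of_le (by omega), map_zero, smul_zero]

end Action

section Relations

variable (k : K) (n : ℕ)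

lemma weightOp_mul_raiseOp : weightOp k n * raiseOp n = raiseOp n * weightOp k n + raiseOp n :=
  ext_weightVec fun j _ => by
    simp only [Module.End.mul_apply, LinearMap.add_apply, raiseOp_weightVec, weightOp_weightVec,
      map_smul]
    push_cast
    module

lemma lowerOp_mul_weightOp (hc : lowerCoeff k n = 0) :
    lowerOp k n * weightOp k n = weightOp k n * lowerOp k n + lowerOp k n :=
  ext_weightVec fun j _ => by
    cases j with
    | zero => simp [weightOp_weightVec, lowerOp_weightVec_zero]
    | succ j =>
      simp only [Module.End.mul_apply, LinearMap.add_apply, weightOp_weightVec,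
        lowerOp_weightVec_succ k hc, map_smul]
      push_cast
      module

lemma lowerOp_mul_raiseOp (h2 : (2 : K) ≠ 0) (hc : lowerCoeff k n = 0) :
    lowerOp k n * raiseOp n = raiseOp n * lowerOp k n - weightOp k n :=
  ext_weightVec fun j _ => by
    simp only [Module.End.mul_apply, LinearMap.sub_apply, raiseOp_weightVec,
      lowerOp_weightVec_succ k hc, weightOp_weightVec, lowerCoeff_succ h2]
    cases j with
    | zero => simp [lowerOp_weightVec_zero, lowerCoeff]
    | succ j => simp only [lowerOp_weightVec_succ k hc, map_smul, raiseOp_weightVec]; module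

lemma raiseOp_pow_weightVec (m j : ℕ) :
    (raiseOp n ^ m) (weightVec n j) = (weightVec n (j + m) : Fin n → K) := by
  induction m with
  | zero => rfl
  | succ m ih => rw [pow_succ', Module.End.mul_apply, ih, raiseOp_weightVec, add_assoc]

lemma raiseOp_pow_self : raiseOp (K := K) n ^ n = 0 :=
  ext_weightVec fun j _ => by
    rw [raiseOp_pow_weightVec, weightVec_of_le (by omega), LinearMap.zero_apply]

lemma lowerOp_pow_weightVec_of_lt (hc : lowerCoeff k n = 0) {m j : ℕ} (hjm : j < m) :
    (lowerOp k n ^ m) (weightVec n j) = 0 := by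
  induction m generalizing j with
  | zero => omega
  | succ m ih =>
    rw [pow_succ, Module.End.mul_apply]
    cases j with
    | zero => rw [lowerOp_weightVec_zero, map_zero]
    | succ j => rw [lowerOp_weightVec_succ k hc, map_smul, ih (by omega), smul_zero]

lemma lowerOp_pow_self (hc : lowerCoeff k n = 0) : lowerOp k n ^ n = 0 :=
  ext_weightVec fun _ hj => lowerOp_pow_weightVec_of_lt k n hc hj

lemma weightOp_pow_eq_self {p : ℕ} (hk : ∀ j < n, (k + j) ^ p = k + j) :
    weightOp k n ^ p = weightOp k n := by
  rw [weightOp, LinearMap.pow_mulLeft]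
  congr 1
  exact funext fun i => hk i i.isLt

end Relations

section Representation

variable (K) in
noncomputable def generatorImage (k : K) (n : ℕ) : Fin 6 → Module.End K (Fin n → K) :=
  ![0, lowerOp k n, weightOp k n, 1, 0, raiseOp n]

variable (k : K) (n p : ℕ)

lemma lift_generatorImage_eq_of_DRel (hp : p ≠ 0) (h2 : (2 : K) ≠ 0) (hnp : n ≤ p)
    (hc : lowerCoeff k n = 0) (hk : ∀ j < n, (k + j) ^ p = k + j)
    ⦃a b : FreeAlgebra K (Fin 6)⦄ (h : DRel K p a b) :
    FreeAlgebra.lift K (generatorImage K k n) a = FreeAlgebra.lift K (generatorImage K k n) b := by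
  have raise_pow : raiseOp (K := K) n ^ p = 0 := pow_eq_zero_of_le hnp (raiseOp_pow_self n)
  have lower_pow : lowerOp k n ^ p = 0 := pow_eq_zero_of_le hnp (lowerOp_pow_self k n hc)
  cases h <;>
    simp only [map_mul, map_pow, map_add, map_sub, map_one, map_smul, FreeAlgebra.lift_ι_apply,
      generatorImage, Matrix.cons_val] <;>
    simp [raise_pow, lower_pow, hp, weightOp_pow_eq_self k n hk, weightOp_mul_raiseOp,
      lowerOp_mul_weightOp k n hc, lowerOp_mul_raiseOp k n h2 hc]

noncomputable def weightRep (hp : p ≠ 0) (h2 : (2 : K) ≠ 0) (hnp : n ≤ p)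
    (hc : lowerCoeff k n = 0) (hk : ∀ j < n, (k + j) ^ p = k + j) :
    DH K p →ₐ[K] Module.End K (Fin n → K) :=
  RingQuot.liftAlgHom K
    ⟨FreeAlgebra.lift K (generatorImage K k n),
      lift_generatorImage_eq_of_DRel k n p hp h2 hnp hc hk⟩

lemma weightRep_mkAlgHom_ι (hp : p ≠ 0) (h2 : (2 : K) ≠ 0) (hnp : n ≤ p)
    (hc : lowerCoeff k n = 0) (hk : ∀ j < n, (k + j) ^ p = k + j) (i : Fin 6) :
    weightRep k n p hp h2 hnp hc hk (RingQuot.mkAlgHom K (DRel K p) (FreeAlgebra.ι K i)) =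
      generatorImage K k n i := by
  rw [weightRep, RingQuot.liftAlgHom_mkAlgHom_apply, FreeAlgebra.lift_ι_apply]

end Representation

section Simplicity

/-- Lagrange interpolation: multiplying `w` by `∏_{j ≠ i} (d - d j)` kills every coordinate
but the `i`-th one. -/
lemma exists_single_mem_of_mul_mem {ι : Type*} [Fintype ι] [DecidableEq ι] {d : ι → K}
    (hd : Function.Injective d) {W : Submodule K (ι → K)} (hW : ∀ f ∈ W, d * f ∈ W)
    (hne : W ≠ ⊥) : ∃ i, Pi.single i 1 ∈ W := by
  obtain ⟨w, hw, hw0⟩ := W.exists_mem_ne_zero_of_ne_bot hne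
  obtain ⟨i, hi⟩ := Function.ne_iff.mp hw0
  have prod_mul_mem : ∀ s : Finset ι, (∏ j ∈ s, (d - fun _ => d j)) * w ∈ W := by
    intro s
    induction s using Finset.induction_on with
    | empty => simpa using hw
    | insert j s _ ih =>
      rw [Finset.prod_insert ‹_›, mul_assoc]
      have hsplit : ∀ f : ι → K, (d - fun _ => d j) * f = d * f - d j • f := fun f => by
        ext; simp [sub_mul]
      rw [hsplit]
      exact W.sub_mem (hW _ ih) (W.smul_mem _ ih)
  have hcoeff : (∏ j ∈ Finset.univ.erase i, (d - fun _ => d j)) * w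
      = ((∏ j ∈ Finset.univ.erase i, (d i - d j)) * w i) • Pi.single i 1 := by
    ext l
    by_cases hl : l = i
    · subst hl; simp [Finset.prod_apply]
    · rw [Pi.mul_apply, Finset.prod_apply,
        Finset.prod_eq_zero (Finset.mem_erase.mpr ⟨hl, Finset.mem_univ l⟩) (by simp)]
      simp [hl]
  have hne0 : (∏ j ∈ Finset.univ.erase i, (d i - d j)) * w i ≠ 0 :=
    mul_ne_zero (Finset.prod_ne_zero_iff.mpr fun j hj =>
      sub_ne_zero.mpr fun h => (Finset.mem_erase.mp hj).1 (hd h).symm) hi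
  exact ⟨i, (W.smul_mem_iff hne0).mp (hcoeff ▸ prod_mul_mem _)⟩

variable {k : K} {n : ℕ} {W : Submodule K (Fin n → K)}

lemma weightVec_zero_mem_of_weightVec_mem (hc : lowerCoeff k n = 0)
    (hcne : ∀ j, j + 1 < n → lowerCoeff k (j + 1) ≠ 0) (hV : ∀ f ∈ W, lowerOp k n f ∈ W)
    {j : ℕ} (hj : j < n) (hmem : weightVec n j ∈ W) : weightVec n 0 ∈ W := by
  induction j with
  | zero => exact hmem
  | succ j ih =>
    refine ih (by omega) ((W.smul_mem_iff (hcne j hj)).mp ?_)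
    rw [← lowerOp_weightVec_succ k hc]
    exact hV _ hmem

lemma weightVec_mem_of_weightVec_zero_mem (hY : ∀ f ∈ W, raiseOp n f ∈ W)
    (hmem : weightVec n 0 ∈ W) (j : ℕ) : weightVec n j ∈ W := by
  induction j with
  | zero => exact hmem
  | succ j ih => exact raiseOp_weightVec (K := K) j ▸ hY _ ih

lemma eq_bot_or_eq_top_of_invariant (hc : lowerCoeff k n = 0)
    (hinj : (Set.Iio n).InjOn ((↑) : ℕ → K))
    (hcne : ∀ j, j + 1 < n → lowerCoeff k (j + 1) ≠ 0)
    (hZ : ∀ f ∈ W, weightOp k n f ∈ W) (hV : ∀ f ∈ W, lowerOp k n f ∈ W)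
    (hY : ∀ f ∈ W, raiseOp n f ∈ W) : W = ⊥ ∨ W = ⊤ := by
  refine or_iff_not_imp_left.mpr fun hne => ?_
  have hd : Function.Injective fun i : Fin n => k + (i : ℕ) := fun i i' h =>
    Fin.ext (hinj i.isLt i'.isLt (add_left_cancel h))
  obtain ⟨i, hi⟩ := exists_single_mem_of_mul_mem hd hZ hne
  rw [← weightVec_val] at hi
  have h0 := weightVec_zero_mem_of_weightVec_mem hc hcne hV i.isLt hi
  rw [eq_top_iff, ← (Pi.basisFun K (Fin n)).span_eq, Submodule.span_le]
  rintro _ ⟨j, rfl⟩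
  rw [Pi.basisFun_apply, ← weightVec_val]
  exact weightVec_mem_of_weightVec_zero_mem hY h0 j

end Simplicity

section CharP

variable {p : ℕ} [CharP K p]

lemma natCast_ne_zero_of_lt_char {m : ℕ} (hm : 0 < m) (hmp : m < p) : (m : K) ≠ 0 := fun h =>
  hm.ne' (CharP.natCast_injOn_Iio K p hmp (hmp.trans' hm) (h.trans Nat.cast_zero.symm))

lemma lowerCoeff_succ_ne_zero (h2 : (2 : K) ≠ 0) {k : K} {r j : ℕ} (hr : (r : K) = -(2 * k))
    (hrp : r < p) (hj : j < r) : lowerCoeff k (j + 1) ≠ 0 := by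
  have hfactor : 1 - 2 * k - ((j + 1 : ℕ) : K) = ((r - j : ℕ) : K) := by
    rw [Nat.cast_sub hj.le, hr]; push_cast; ring
  rw [lowerCoeff, hfactor]
  exact mul_ne_zero (mul_ne_zero (by simpa using h2) (natCast_ne_zero_of_lt_char (by omega)
    (by omega))) (natCast_ne_zero_of_lt_char (by omega) (by omega))

variable [Fact p.Prime]

lemma natCast_val_neg_two_mul (k0 : ZMod p) :
    (((-2 : ZMod p) * k0).val : K) = -(2 * ZMod.castHom (dvd_refl p) K k0) := by
  rw [ZMod.natCast_val, ← ZMod.castHom_apply (h := dvd_refl p), map_mul, map_neg, map_ofNat,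
    neg_mul]

lemma castHom_add_natCast_pow_char (k0 : ZMod p) (j : ℕ) :
    (ZMod.castHom (dvd_refl p) K k0 + j) ^ p = ZMod.castHom (dvd_refl p) K k0 + j := by
  rw [← map_natCast (ZMod.castHom (dvd_refl p) K) j, ← map_add, ← map_pow, ZMod.pow_card]

end CharP

theorem stmt10 (K : Type*) [Field K] (p : ℕ) [Fact p.Prime] (hp2 : 2 < p)
    [CharP K p] (k0 : ZMod p) (r : ℕ) (hr : r = ((-2 : ZMod p) * k0).val) :
    ∃ ρ : DH K p →ₐ[K] Module.End K (Fin (r + 1) → K),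
      (∀ j : Fin (r + 1), ρ (z K p) (Pi.single j 1)
        = ((ZMod.castHom (dvd_refl p) K) k0 + ((j : ℕ) : K)) • (Pi.single j (1 : K) : Fin (r + 1) → K)) ∧
      ρ (v K p) (Pi.single (0 : Fin (r + 1)) 1) = 0 ∧
      (∀ (j : ℕ) (h : j + 1 < r + 1),
        ρ (v K p) (Pi.single (⟨j + 1, h⟩ : Fin (r + 1)) 1)
          = ((1/2 : K) * ((j : K) + 1) * (1 - 2 * (ZMod.castHom (dvd_refl p) K) k0 - ((j : K) + 1)))
            • (Pi.single (⟨j, Nat.lt_of_succ_lt h⟩ : Fin (r + 1)) (1 : K) : Fin (r + 1) → K)) ∧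
      (∀ (j : ℕ) (h : j + 1 < r + 1),
        ρ (y K p) (Pi.single (⟨j, Nat.lt_of_succ_lt h⟩ : Fin (r + 1)) 1)
          = (Pi.single (⟨j + 1, h⟩ : Fin (r + 1)) (1 : K) : Fin (r + 1) → K)) ∧
      ρ (y K p) (Pi.single (⟨r, Nat.lt_succ_self r⟩ : Fin (r + 1)) (1 : K)) = 0 ∧
      ρ (x K p) = 0 ∧ ρ (u K p) = 0 ∧ ρ (g K p) = 1 ∧
      Module.finrank K (Fin (r + 1) → K) = r + 1 ∧
      (∀ W : Submodule K (Fin (r + 1) → K),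
        (∀ (d : DH K p) (w : Fin (r + 1) → K), w ∈ W → ρ d w ∈ W) → W = ⊥ ∨ W = ⊤) := by
  set k := ZMod.castHom (dvd_refl p) K k0
  have hp : p ≠ 0 := (Fact.out : p.Prime).ne_zero
  have h2 : (2 : K) ≠ 0 := by exact_mod_cast natCast_ne_zero_of_lt_char (K := K) two_pos hp2
  have hrp : r < p := hr ▸ ZMod.val_lt _
  have hrk : (r : K) = -(2 * k) := hr ▸ natCast_val_neg_two_mul k0
  have hc := lowerCoeff_succ_eq_zero hrk
  have hk : ∀ j < r + 1, (k + j) ^ p = k + j := fun j _ => castHom_add_natCast_pow_char k0 j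
  let ρ := weightRep k (r + 1) p hp h2 hrp hc hk
  have hρ := weightRep_mkAlgHom_ι k (r + 1) p hp h2 hrp hc hk
  have hz : ρ (z K p) = weightOp k (r + 1) := hρ 2
  have hv : ρ (v K p) = lowerOp k (r + 1) := hρ 1
  have hy : ρ (y K p) = raiseOp (r + 1) := hρ 5
  refine ⟨ρ, fun j => ?_, ?_, fun j h => ?_, fun j h => ?_, ?_, hρ 4, hρ 0, hρ 3,
    Module.finrank_fin_fun K, fun W hW => ?_⟩
  · rw [← weightVec_val, hz, weightOp_weightVec]
  · rw [← weightVec_val, hv, Fin.val_zero, lowerOp_weightVec_zero]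
  · rw [← weightVec_of_lt h, ← weightVec_of_lt, hv, lowerOp_weightVec_succ k hc, lowerCoeff]
    push_cast; rfl
  · rw [← weightVec_of_lt h, ← weightVec_of_lt, hy, raiseOp_weightVec]
  · rw [← weightVec_of_lt, hy, raiseOp_weightVec, weightVec_of_le le_rfl]
  · exact eq_bot_or_eq_top_of_invariant hc
      ((CharP.natCast_injOn_Iio K p).mono (Set.Iio_subset_Iio hrp))
      (fun j hj => lowerCoeff_succ_ne_zero h2 hrk hrp (by omega))
      (fun f => hz ▸ hW (z K p) f) (fun f => hv ▸ hW (v K p) f) (fun f => hy ▸ hW (y K p) f)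

end RestrictedJordanDouble
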